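/- arXiv:2102.13245 — 2 statements merged into one kernel-verified Lean document; each statement's English description precedes it below -/
import Mathlib

section
/- Fix a rank-r projector P_r, data y, and N ≥ 1, and let (X_r, X_⊥^{(1)},…,X_⊥^{(N)}) be distributed on Im(P_r) × Ker(P_r)^N according to the density π_tar^{y,N}(x_r, {x_⊥^{(i)}}) ∝ π_pr(x_r) (Σ_{i=1}^N L^y(x_r + x_⊥^{(i)})) Π_{j=1}^N π_pr(x_⊥^{(j)}|x_r). Conditionally on (X_r, {X_⊥^{(i)}}), select X_⊥ ∈ {X_⊥^{(1)},…,X_⊥^{(N)}} with probabilities P(X_⊥ = X_⊥^{(k)} | X_r, {X_⊥^{(i)}}) = L^y(X_r + X_⊥^{(k)}) / Σ_{i=1}^N L^y(X_r + X_⊥^{(i)}). Then the random vector X = X_r + X_⊥ is distributed according to the exact posterior density π_pos^y(x) ∝ L^y(x) π_pr(x). -/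
open MeasureTheory Matrix

noncomputable section

/-- `P` is a projector matrix of rank `r`. -/
def IsProjector {d : ℕ} (P : Matrix (Fin d) (Fin d) ℝ) (r : ℕ) : Prop :=
  P * P = P ∧ P.rank = r

/-- `p` is a probability density on `ℝ^n` (w.r.t. Lebesgue measure). -/
def IsDensity {n : ℕ} (p : (Fin n → ℝ) → ℝ) : Prop :=
  Measurable p ∧ (∀ x, 0 ≤ p x) ∧ ∫ x, p x = 1

/-- Integral of `f` over the kernel of `P` (a subspace of dimension `d − r` for a rank-`r`
projector), with respect to the `(d−r)`-dimensional Hausdorff measure. -/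
def kerIntegral {d : ℕ} (P : Matrix (Fin d) (Fin d) ℝ) (r : ℕ)
    (f : (Fin d → ℝ) → ℝ) : ℝ :=
  ∫ z in {z : Fin d → ℝ | P.mulVec z = 0}, f z ∂(μH[((d - r : ℕ) : ℝ)])

/-- Marginal density of `ρ` on `Im(P)`: `ρ(x_r) = ∫_{Ker P} ρ(x_r + x⊥) dx⊥`. -/
def margDensity {d : ℕ} (P : Matrix (Fin d) (Fin d) ℝ) (r : ℕ)
    (ρ : (Fin d → ℝ) → ℝ) (xr : Fin d → ℝ) : ℝ :=
  kerIntegral P r (fun z => ρ (xr + z))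

/-- Conditional density `ρ(x⊥ | x_r) = ρ(x_r + x⊥) / ρ(x_r)`. -/
def condDensity {d : ℕ} (P : Matrix (Fin d) (Fin d) ℝ) (r : ℕ)
    (ρ : (Fin d → ℝ) → ℝ) (xr z : Fin d → ℝ) : ℝ :=
  ρ (xr + z) / margDensity P r ρ xr

/-- Optimal parameter-reduced likelihood `L*(x_r) = ∫_{Ker P} L(x_r + x⊥) π_pr(x⊥|x_r) dx⊥`. -/
def reducedLik {d : ℕ} (P : Matrix (Fin d) (Fin d) ℝ) (r : ℕ)
    (πpr L : (Fin d → ℝ) → ℝ) (xr : Fin d → ℝ) : ℝ :=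
  kerIntegral P r (fun z => L (xr + z) * condDensity P r πpr xr z)

/-- Evidence (normalizing constant) `∫ L(x) π_pr(x) dx`. -/
def evidence {n : ℕ} (πpr L : (Fin n → ℝ) → ℝ) : ℝ := ∫ x, L x * πpr x

/-- The normalized posterior density associated with prior `πpr` and likelihood `L`. -/
def posteriorDensity {n : ℕ} (πpr L : (Fin n → ℝ) → ℝ) (x : Fin n → ℝ) : ℝ :=
  L x * πpr x / evidence πpr L

/-- The normalized approximate posterior obtained from the optimal parameter-reduced
likelihood: `π*(x) ∝ L*(P x) π_pr(x)`. -/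
def approxPosterior {d : ℕ} (P : Matrix (Fin d) (Fin d) ℝ) (r : ℕ)
    (πpr L : (Fin d → ℝ) → ℝ) (x : Fin d → ℝ) : ℝ :=
  posteriorDensity πpr (fun x' => reducedLik P r πpr L (P.mulVec x')) x

/-- Kullback–Leibler divergence of density `p` from density `q`. -/
def KLdiv {n : ℕ} (p q : (Fin n → ℝ) → ℝ) : ℝ := ∫ x, Real.log (p x / q x) * p x

/-- Gradient of `f : ℝ^n → ℝ`. -/
def grad {n : ℕ} (f : (Fin n → ℝ) → ℝ) (x : Fin n → ℝ) : Fin n → ℝ :=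
  fun i => fderiv ℝ f x (Pi.single i 1)

/-- Jacobian matrix of `G : ℝ^d → ℝ^m`. -/
def jacobian {d m : ℕ} (G : (Fin d → ℝ) → (Fin m → ℝ)) (x : Fin d → ℝ) :
    Matrix (Fin m) (Fin d) ℝ :=
  Matrix.of fun i j => fderiv ℝ (fun x' => G x' i) x (Pi.single j 1)

/-- Weighted squared norm `‖v‖²_S = vᵀ S v`. -/
def wSq {m : ℕ} (S : Matrix (Fin m) (Fin m) ℝ) (v : Fin m → ℝ) : ℝ := v ⬝ᵥ S.mulVec v

/-- The matrix `H = ∫ (∇ log L)(∇ log L)ᵀ π_pos dx`. -/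
def Hmatrix {d : ℕ} (πpr L : (Fin d → ℝ) → ℝ) : Matrix (Fin d) (Fin d) ℝ :=
  Matrix.of fun i j =>
    ∫ x, grad (fun x' => Real.log (L x')) x i * grad (fun x' => Real.log (L x')) x j *
      posteriorDensity πpr L x

/-- Subspace logarithmic Sobolev inequality for the prior `πpr` with constant `κ` and
symmetric positive definite matrix `Γ` (Assumption 1). -/
def SubspaceLogSobolev {d : ℕ} (πpr : (Fin d → ℝ) → ℝ) (κ : ℝ)
    (Γ : Matrix (Fin d) (Fin d) ℝ) : Prop :=
  ∀ (r : ℕ) (P : Matrix (Fin d) (Fin d) ℝ), IsProjector P r →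
    ∀ h : (Fin d → ℝ) → ℝ, ContDiff ℝ 1 h →
      (∫ x, (h x) ^ 2 * Real.log ((h x) ^ 2 /
          kerIntegral P r
            (fun z => (h (P.mulVec x + z)) ^ 2 * condDensity P r πpr (P.mulVec x) z)) * πpr x)
      ≤ 2 * κ *
        ∫ x, ((1 - P)ᵀ.mulVec (grad h x)) ⬝ᵥ (Γ⁻¹.mulVec ((1 - P)ᵀ.mulVec (grad h x))) * πpr x

/-- Subspace Poincaré inequality for the prior `πpr` with constant `κ` and symmetric
positive definite matrix `Γ` (Assumption 2). -/
def SubspacePoincare {d : ℕ} (πpr : (Fin d → ℝ) → ℝ) (κ : ℝ)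
    (Γ : Matrix (Fin d) (Fin d) ℝ) : Prop :=
  ∀ (r : ℕ) (P : Matrix (Fin d) (Fin d) ℝ), IsProjector P r →
    ∀ h : (Fin d → ℝ) → ℝ, ContDiff ℝ 1 h →
      (∫ x, (h x -
          kerIntegral P r
            (fun z => h (P.mulVec x + z) * condDensity P r πpr (P.mulVec x) z)) ^ 2 * πpr x)
      ≤ κ *
        ∫ x, ((1 - P)ᵀ.mulVec (grad h x)) ⬝ᵥ (Γ⁻¹.mulVec ((1 - P)ᵀ.mulVec (grad h x))) * πpr x

/-- Gaussian likelihood `L^y(x) = Z⁻¹ exp(−½‖G(x) − y‖²_{Σ⁻¹})`. -/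
def gaussLik {d m : ℕ} (G : (Fin d → ℝ) → (Fin m → ℝ)) (Sobs : Matrix (Fin m) (Fin m) ℝ)
    (y : Fin m → ℝ) (x : Fin d → ℝ) : ℝ :=
  Real.exp (-(1 / 2) * wSq Sobs⁻¹ (G x - y)) / Real.sqrt ((2 * Real.pi) ^ m * Sobs.det)

/-- Conditional expectation of a vector-valued map `G` over `Ker(P)`:
`G̃*(x_r) = ∫_{Ker P} G(x_r + x⊥) π_pr(x⊥|x_r) dx⊥`. -/
def condExpVec {d m : ℕ} (P : Matrix (Fin d) (Fin d) ℝ) (r : ℕ)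
    (πpr : (Fin d → ℝ) → ℝ) (G : (Fin d → ℝ) → (Fin m → ℝ)) (xr : Fin d → ℝ) :
    Fin m → ℝ :=
  fun i => kerIntegral P r (fun z => G (xr + z) i * condDensity P r πpr xr z)

/-- The Fisher information matrix `I(x) = ∫ (∇ₓ log L^y(x))(∇ₓ log L^y(x))ᵀ L^y(x) dy`. -/
def fisherMatrix {d m : ℕ} (L : (Fin m → ℝ) → (Fin d → ℝ) → ℝ) (x : Fin d → ℝ) :
    Matrix (Fin d) (Fin d) ℝ :=
  Matrix.of fun i j =>
    ∫ y, grad (fun x' => Real.log (L y x')) x i * grad (fun x' => Real.log (L y x')) x j * L y x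

/-- Reference (product) measure on `Im(P) × Ker(P)^N`: the `r`-dimensional Hausdorff
measure on `Im(P)` times the `N`-fold product of the `(d−r)`-dimensional Hausdorff
measure on `Ker(P)`. -/
def pmMeasure {d : ℕ} (P : Matrix (Fin d) (Fin d) ℝ) (r N : ℕ) :
    Measure ((Fin d → ℝ) × (Fin N → Fin d → ℝ)) :=
  ((μH[((r : ℕ) : ℝ)]).restrict (Set.range P.mulVec)).prod
    (Measure.pi fun _ : Fin N =>
      (μH[((d - r : ℕ) : ℝ)]).restrict {z : Fin d → ℝ | P.mulVec z = 0})

/-- Unnormalized pseudo-marginal target density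
`π_tar(x_r, {x⊥⁽ⁱ⁾}) ∝ π_pr(x_r) (Σᵢ L(x_r + x⊥⁽ⁱ⁾)) Πⱼ π_pr(x⊥⁽ʲ⁾|x_r)`. -/
def pmTarget {d N : ℕ} (P : Matrix (Fin d) (Fin d) ℝ) (r : ℕ)
    (πpr L : (Fin d → ℝ) → ℝ) (s : (Fin d → ℝ) × (Fin N → Fin d → ℝ)) : ℝ :=
  margDensity P r πpr s.1 * (∑ i, L (s.1 + s.2 i)) *
    ∏ j, condDensity P r πpr s.1 (s.2 j)

/-- Pseudo-marginal proposal density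
`Q(x_r†, {x⊥†⁽ⁱ⁾} | x_r, {x⊥⁽ⁱ⁾}) = q(x_r†|x_r) Πᵢ π_pr(x⊥†⁽ⁱ⁾|x_r†)`. -/
def pmProposal {d N : ℕ} (P : Matrix (Fin d) (Fin d) ℝ) (r : ℕ)
    (πpr : (Fin d → ℝ) → ℝ) (q : (Fin d → ℝ) → (Fin d → ℝ) → ℝ)
    (t s : (Fin d → ℝ) × (Fin N → Fin d → ℝ)) : ℝ :=
  q t.1 s.1 * ∏ i, condDensity P r πpr t.1 (t.2 i)

/-- Pseudo-marginal acceptance probability `α̂_N(x_r†|x_r)`. -/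
def pmAccept {d N : ℕ} (P : Matrix (Fin d) (Fin d) ℝ) (r : ℕ)
    (πpr L : (Fin d → ℝ) → ℝ) (q : (Fin d → ℝ) → (Fin d → ℝ) → ℝ)
    (t s : (Fin d → ℝ) × (Fin N → Fin d → ℝ)) : ℝ :=
  min 1 ((margDensity P r πpr t.1 * (∑ i, L (t.1 + t.2 i)) * q s.1 t.1) /
    (margDensity P r πpr s.1 * (∑ i, L (s.1 + s.2 i)) * q t.1 s.1))


/-!
After the selection weights `L(x_r + x⊥⁽ᵏ⁾) / Σᵢ L(x_r + x⊥⁽ⁱ⁾)` cancel the factor `Σᵢ L` of the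
target, the selected sample has unnormalised law
`Σₖ (Lφ)(x_r + x⊥⁽ᵏ⁾) π_pr(x_r) Πⱼ π_pr(x⊥⁽ʲ⁾|x_r)`. In the `k`-th term the `N - 1` conditional
densities with `j ≠ k` integrate to one and the `k`-th one recombines with the marginal, so each
term contributes `∫∫ (Lφ π_pr)(x_r + x⊥) dx⊥ dx_r`. Finally `(x_r, x⊥) ↦ x_r + x⊥` pushes the
product of the Hausdorff measures on `Im P` and `Ker P` to a Haar measure on `ℝ^d`, i.e. to
`c • volume` for some `0 < c < ∞`; so the selection integral and the normalising constant equal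
`N c ∫ Lφ π_pr` and `N c ∫ L π_pr`, and `N c` cancels.
-/

open Module
open scoped ENNReal

theorem Fintype.prod_ite_eq_mul_prod_compl {ι M : Type*} [Fintype ι] [DecidableEq ι]
    [CommMonoid M] (k : ι) (a b : ι → M) :
    ∏ j, (if j = k then a j else b j) = a k * ∏ j ∈ {k}ᶜ, b j := by
  rw [Fintype.prod_eq_mul_prod_compl k, if_pos rfl]
  exact congrArg _ (Finset.prod_congr rfl fun j hj ↦ if_neg (by simpa using hj))

theorem Finset.sum_div_sum_mul_mul_sum_mul {ι : Type*} (s : Finset ι) {a : ι → ℝ}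
    (ha : ∀ i ∈ s, 0 ≤ a i) (b : ι → ℝ) (Q : ℝ) :
    (∑ k ∈ s, a k / (∑ i ∈ s, a i) * b k) * ((∑ i ∈ s, a i) * Q) = ∑ k ∈ s, a k * b k * Q := by
  by_cases hS : ∑ i ∈ s, a i = 0
  · have ha0 := (Finset.sum_eq_zero_iff_of_nonneg ha).mp hS
    have h0 : ∑ k ∈ s, a k * b k * Q = 0 :=
      Finset.sum_eq_zero fun k hk ↦ by rw [ha0 k hk, zero_mul, zero_mul]
    rw [hS, h0, zero_mul, mul_zero]
  · rw [← mul_assoc, Finset.sum_mul, Finset.sum_mul]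
    exact Finset.sum_congr rfl fun k _ ↦ by field_simp

theorem ENNReal.toReal_mul_div_toReal_mul_left {a : ℝ≥0∞} (ha0 : a ≠ 0) (ha : a ≠ ∞)
    (x y : ℝ≥0∞) :
    (a * x).toReal / (a * y).toReal = x.toReal / y.toReal := by
  rw [ENNReal.toReal_mul, ENNReal.toReal_mul,
    mul_div_mul_left _ _ (ENNReal.toReal_pos ha0 ha).ne']

namespace MeasureTheory

theorem lintegral_pi_prod_eq_prod {α : Type*} [MeasurableSpace α] (μ : Measure α) [SigmaFinite μ]
    {n : ℕ} (f : Fin n → α → ℝ≥0∞) (hf : ∀ i, Measurable (f i)) :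
    ∫⁻ x : Fin n → α, ∏ i, f i (x i) ∂(Measure.pi fun _ ↦ μ) = ∏ i, ∫⁻ x, f i x ∂μ := by
  induction n with
  | zero => simp
  | succ n ih =>
    let e := MeasurableEquiv.piFinSuccAbove (fun _ : Fin (n + 1) ↦ α) 0
    have he : ∀ p : α × (Fin n → α), e.symm p = Fin.cons p.1 p.2 := fun p ↦ by
      ext j; simp [e, MeasurableEquiv.piFinSuccAbove]
    calc
      _ = ∫⁻ p : α × (Fin n → α), f 0 p.1 * ∏ i : Fin n, f i.succ (p.2 i)
            ∂(μ.prod (Measure.pi fun _ ↦ μ)) := by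
        rw [← ((measurePreserving_piFinSuccAbove (fun _ ↦ μ) 0).symm e).lintegral_comp_emb
          e.symm.measurableEmbedding]
        simp [he, Fin.prod_univ_succ]
      _ = (∫⁻ x, f 0 x ∂μ) * ∏ i : Fin n, ∫⁻ x, f i.succ x ∂μ := by
        rw [← ih _ fun i ↦ hf i.succ]
        exact lintegral_prod_mul (hf 0).aemeasurable (Finset.measurable_prod _
          fun (i : Fin n) _ ↦ (hf i.succ).comp (measurable_pi_apply i)).aemeasurable
      _ = ∏ i, ∫⁻ x, f i x ∂μ := (Fin.prod_univ_succ (fun i : Fin (n + 1) ↦ ∫⁻ x, f i x ∂μ)).symm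

theorem lintegral_pi_sum_mul_prod {α : Type*} [MeasurableSpace α] (ν : Measure α) [SigmaFinite ν]
    (N : ℕ) {G h : α → ℝ≥0∞} (hG : Measurable G) (hh : Measurable h) :
    ∫⁻ z : Fin N → α, ∑ k, G (z k) * ∏ j, h (z j) ∂(Measure.pi fun _ ↦ ν)
      = N * ((∫⁻ x, G x * h x ∂ν) * (∫⁻ x, h x ∂ν) ^ (N - 1)) := by
  classical
  have hterm : ∀ k : Fin N, ∫⁻ z : Fin N → α, G (z k) * ∏ j, h (z j) ∂(Measure.pi fun _ ↦ ν)
      = (∫⁻ x, G x * h x ∂ν) * (∫⁻ x, h x ∂ν) ^ (N - 1) := fun k ↦ by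
    let g : Fin N → α → ℝ≥0∞ := fun j x ↦ if j = k then G x * h x else h x
    calc
      _ = ∫⁻ z : Fin N → α, ∏ j, g j (z j) ∂(Measure.pi fun _ ↦ ν) := by
        refine lintegral_congr fun z ↦ ?_
        rw [Fintype.prod_ite_eq_mul_prod_compl, Fintype.prod_eq_mul_prod_compl k, mul_assoc]
      _ = _ := by
        have hg : ∀ j, ∫⁻ x, g j x ∂ν = if j = k then ∫⁻ x, G x * h x ∂ν else ∫⁻ x, h x ∂ν :=
          fun j ↦ by by_cases hj : j = k <;> simp [g, hj]
        rw [lintegral_pi_prod_eq_prod ν g fun j ↦ by unfold g; split_ifs <;> fun_prop]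
        simp only [hg, Fintype.prod_ite_eq_mul_prod_compl, Finset.prod_const, Finset.card_compl,
          Finset.card_singleton, Fintype.card_fin]
  rw [lintegral_finsetSum _ fun k _ ↦ by fun_prop]
  simp [hterm]

theorem lintegral_pi_sum_mul_ofReal_normalized_prod {α : Type*} [MeasurableSpace α]
    (ν : Measure α) [SigmaFinite ν] (N : ℕ) {q : α → ℝ} (hq : Measurable q) (hq0 : ∀ x, 0 ≤ q x)
    (hfin : ∫⁻ x, ENNReal.ofReal (q x) ∂ν ≠ ∞) {G : α → ℝ≥0∞} (hG : Measurable G) :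
    ∫⁻ z : Fin N → α, ∑ k, G (z k) * ENNReal.ofReal ((∫ x, q x ∂ν) * ∏ j, q (z j) / ∫ x, q x ∂ν)
        ∂(Measure.pi fun _ ↦ ν)
      = N * ∫⁻ x, G x * ENNReal.ofReal (q x) ∂ν := by
  have hm : ENNReal.ofReal (∫ x, q x ∂ν) = ∫⁻ x, ENNReal.ofReal (q x) ∂ν := by
    rw [integral_eq_lintegral_of_nonneg_ae (ae_of_all _ hq0) hq.aestronglyMeasurable,
      ENNReal.ofReal_toReal hfin]
  have hm0 : 0 ≤ ∫ x, q x ∂ν := integral_nonneg hq0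
  generalize ∫ x, q x ∂ν = m at hm hm0 ⊢
  rcases hm0.eq_or_lt with rfl | hmpos
  -- the conditional density is the junk value `q / 0 = 0`, but then `q = 0` a.e. as well
  · have hq_ae : ∀ᵐ x ∂ν, ENNReal.ofReal (q x) = 0 :=
      (lintegral_eq_zero_iff (by fun_prop)).mp (by rw [← hm, ENNReal.ofReal_zero])
    rw [lintegral_congr_ae (hq_ae.mono fun x hx ↦ by rw [hx, mul_zero])]
    simp
  · set c := ENNReal.ofReal m
    have hc0 : c ≠ 0 := by simpa [c] using hmpos
    have hct : c ≠ ∞ := ENNReal.ofReal_ne_top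
    have hsplit : ∀ z : Fin N → α,
        ∑ k, G (z k) * ENNReal.ofReal (m * ∏ j, q (z j) / m)
          = c * ∑ k, G (z k) * ∏ j, ENNReal.ofReal (q (z j)) * c⁻¹ := by
      intro z
      rw [Finset.mul_sum]
      refine Finset.sum_congr rfl fun k _ ↦ ?_
      rw [ENNReal.ofReal_mul hmpos.le, ENNReal.ofReal_prod_of_nonneg fun j _ ↦
        div_nonneg (hq0 _) hmpos.le, mul_left_comm]
      simp_rw [ENNReal.ofReal_div_of_pos hmpos, div_eq_mul_inv, c]
    simp only [hsplit]
    rw [lintegral_const_mul _ (by fun_prop),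
      lintegral_pi_sum_mul_prod ν N (h := fun x ↦ ENNReal.ofReal (q x) * c⁻¹) hG (by fun_prop),
      lintegral_mul_const _ (by fun_prop), ← hm, ENNReal.mul_inv_cancel hc0 hct, one_pow,
      mul_one]
    simp_rw [← mul_assoc (G _)]
    rw [lintegral_mul_const _ (by fun_prop), mul_comm c, mul_assoc,
      ENNReal.inv_mul_cancel_right hc0 hct]

theorem lintegral_prod_pi_sum_mul_marginal_mul_prod_cond {E : Type*} [MeasurableSpace E] [Add E]
    [MeasurableAdd₂ E] (ν₁ ν₀ : Measure E) [SFinite ν₁] [SigmaFinite ν₀] (N : ℕ) {p : E → ℝ}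
    (hp : Measurable p) (hp0 : ∀ x, 0 ≤ p x)
    (hfin : ∀ᵐ u ∂ν₁, ∫⁻ v, ENNReal.ofReal (p (u + v)) ∂ν₀ ≠ ∞) {F : E → ℝ≥0∞}
    (hF : Measurable F) :
    ∫⁻ s, ∑ k, F (s.1 + s.2 k) * ENNReal.ofReal ((∫ v, p (s.1 + v) ∂ν₀) *
        ∏ j, p (s.1 + s.2 j) / ∫ v, p (s.1 + v) ∂ν₀) ∂(ν₁.prod (Measure.pi fun _ : Fin N ↦ ν₀))
      = N * ∫⁻ u, ∫⁻ v, F (u + v) * ENNReal.ofReal (p (u + v)) ∂ν₀ ∂ν₁ := by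
  have hm : Measurable fun s : E × (Fin N → E) ↦ ∫ v, p (s.1 + v) ∂ν₀ :=
    (StronglyMeasurable.integral_prod_right (f := fun u v ↦ p (u + v))
      (hp.comp measurable_add).stronglyMeasurable).measurable.comp measurable_fst
  have hmeas : Measurable fun s : E × (Fin N → E) ↦ ∑ k, F (s.1 + s.2 k) *
      ENNReal.ofReal ((∫ v, p (s.1 + v) ∂ν₀) * ∏ j, p (s.1 + s.2 j) / ∫ v, p (s.1 + v) ∂ν₀) := by
    fun_prop
  have hfiber : Measurable fun u ↦ ∫⁻ v, F (u + v) * ENNReal.ofReal (p (u + v)) ∂ν₀ :=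
    Measurable.lintegral_prod_right'
      (f := fun x : E × E ↦ F (x.1 + x.2) * ENNReal.ofReal (p (x.1 + x.2))) (by fun_prop)
  rw [lintegral_prod _ hmeas.aemeasurable, ← lintegral_const_mul _ hfiber]
  refine lintegral_congr_ae (hfin.mono fun u hu ↦ ?_)
  exact lintegral_pi_sum_mul_ofReal_normalized_prod ν₀ N (hp.comp (measurable_const_add u))
    (fun v ↦ hp0 _) hu (hF.comp (measurable_const_add u))

end MeasureTheory

theorem restrict_hausdorffMeasure_eq_map_subtype {X S : Type*} [EMetricSpace X]
    [MeasurableSpace X] [BorelSpace X] [SetLike S X] (V : S) {d : ℝ} (hd : 0 ≤ d) :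
    (μH[d]).restrict (V : Set X) = (μH[d] : Measure V).map (↑) := by
  rw [isometry_subtype_coe.map_hausdorffMeasure (Or.inl hd), Subtype.range_coe]

section ComplementarySubspaces

variable {E : Type*} [NormedAddCommGroup E] [NormedSpace ℝ E] [FiniteDimensional ℝ E]
  [MeasurableSpace E] [BorelSpace E]

instance Submodule.sigmaFinite_restrict_hausdorffMeasure (V : Submodule ℝ E) :
    SigmaFinite ((μH[finrank ℝ V]).restrict (V : Set E)) := by
  rw [restrict_hausdorffMeasure_eq_map_subtype V (Nat.cast_nonneg _)]
  -- the subtype metric and the normed-space metric on `V` agree only up to unfolding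
  exact (MeasurableEmbedding.subtype_coe V.closed_of_finiteDimensional.measurableSet
    ).sigmaFinite_map (μ := (μH[finrank ℝ V] : Measure V))

theorem Submodule.exists_lintegral_restrict_hausdorffMeasure_add {V W : Submodule ℝ E}
    (hVW : IsCompl V W) (μ : Measure E) [μ.IsAddHaarMeasure] :
    ∃ c : ℝ≥0∞, c ≠ 0 ∧ c ≠ ∞ ∧ ∀ f : E → ℝ≥0∞, Measurable f →
      ∫⁻ u in V, ∫⁻ v in W, f (u + v) ∂μH[finrank ℝ W] ∂μH[finrank ℝ V] = c * ∫⁻ x, f x ∂μ := by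
  let e := (Submodule.prodEquivOfIsCompl V W hVW).toContinuousLinearEquiv
  let ν : Measure E := ((μH[finrank ℝ V] : Measure V).prod μH[finrank ℝ W]).map e
  have hν : ν = ν.addHaarScalarFactor μ • μ := Measure.isAddLeftInvariant_eq_smul ν μ
  refine ⟨ν.addHaarScalarFactor μ,
    by simpa using (Measure.addHaarScalarFactor_pos_of_isAddHaarMeasure ν μ).ne',
    ENNReal.coe_ne_top, fun f hf ↦ ?_⟩
  have hV : MeasurableEmbedding ((↑) : V → E) :=
    .subtype_coe V.closed_of_finiteDimensional.measurableSet
  have hW : MeasurableEmbedding ((↑) : W → E) :=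
    .subtype_coe W.closed_of_finiteDimensional.measurableSet
  calc
    _ = ∫⁻ u : V, ∫⁻ v : W, f (u + v) ∂μH[finrank ℝ W] ∂μH[finrank ℝ V] := by
      rw [restrict_hausdorffMeasure_eq_map_subtype V (Nat.cast_nonneg _), hV.lintegral_map]
      simp only [restrict_hausdorffMeasure_eq_map_subtype W (Nat.cast_nonneg _), hW.lintegral_map]
    _ = ∫⁻ x, f x ∂ν := by
      rw [lintegral_map hf e.continuous.measurable, lintegral_prod _ (by fun_prop)]
      rfl
    _ = _ := by
      conv_lhs => rw [hν]
      rw [lintegral_smul_measure, ENNReal.smul_def, smul_eq_mul]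

end ComplementarySubspaces

namespace IsProjector

variable {d r : ℕ} {P : Matrix (Fin d) (Fin d) ℝ}

theorem isCompl_range_ker (hP : IsProjector P r) :
    IsCompl (LinearMap.range P.mulVecLin) (LinearMap.ker P.mulVecLin) := by
  refine LinearMap.IsIdempotentElem.isCompl ?_
  rw [IsIdempotentElem, Module.End.mul_eq_comp, ← Matrix.mulVecLin_mul, hP.1]

theorem finrank_ker (hP : IsProjector P r) : finrank ℝ (LinearMap.ker P.mulVecLin) = d - r := by
  have := LinearMap.finrank_range_add_finrank_ker P.mulVecLin
  rw [show finrank ℝ (LinearMap.range P.mulVecLin) = r from hP.2, Module.finrank_fin_fun] at this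
  omega

theorem sigmaFinite_restrict_range (hP : IsProjector P r) :
    SigmaFinite ((μH[((r : ℕ) : ℝ)]).restrict (Set.range P.mulVec)) := by
  rw [← hP.2]
  exact (LinearMap.range P.mulVecLin).sigmaFinite_restrict_hausdorffMeasure

theorem sigmaFinite_restrict_ker (hP : IsProjector P r) :
    SigmaFinite ((μH[((d - r : ℕ) : ℝ)]).restrict {z | P *ᵥ z = 0}) := by
  rw [← hP.finrank_ker]
  exact (LinearMap.ker P.mulVecLin).sigmaFinite_restrict_hausdorffMeasure

theorem exists_lintegral_range_ker (hP : IsProjector P r) :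
    ∃ c : ℝ≥0∞, c ≠ 0 ∧ c ≠ ∞ ∧ ∀ f : (Fin d → ℝ) → ℝ≥0∞, Measurable f →
      ∫⁻ u in Set.range P.mulVec, ∫⁻ v in {z | P *ᵥ z = 0}, f (u + v)
        ∂μH[((d - r : ℕ) : ℝ)] ∂μH[((r : ℕ) : ℝ)] = c * ∫⁻ x, f x := by
  rw [← hP.finrank_ker, ← hP.2]
  exact Submodule.exists_lintegral_restrict_hausdorffMeasure_add hP.isCompl_range_ker volume

end IsProjector

theorem IsDensity.lintegral_ofReal_ne_top {n : ℕ} {p : (Fin n → ℝ) → ℝ} (hp : IsDensity p) :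
    ∫⁻ x, ENNReal.ofReal (p x) ≠ ∞ :=
  (Integrable.of_integral_ne_zero (by rw [hp.2.2]; exact one_ne_zero)).lintegral_lt_top.ne

namespace IsProjector

variable {d r : ℕ} {P : Matrix (Fin d) (Fin d) ℝ}

theorem measurable_margDensity (hP : IsProjector P r) {ρ : (Fin d → ℝ) → ℝ}
    (hρ : Measurable ρ) : Measurable (margDensity P r ρ) :=
  have := hP.sigmaFinite_restrict_ker
  (StronglyMeasurable.integral_prod_right (f := fun u v ↦ ρ (u + v))
    (hρ.comp measurable_add).stronglyMeasurable).measurable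

theorem integral_sum_mul_margDensity_mul_prod_condDensity (hP : IsProjector P r) (N : ℕ)
    {πpr : (Fin d → ℝ) → ℝ} (hπpr : IsDensity πpr) {f : (Fin d → ℝ) → ℝ} (hf : Measurable f)
    (hf0 : ∀ x, 0 ≤ f x) :
    ∫ s, ∑ k, f (s.1 + s.2 k) * (margDensity P r πpr s.1 * ∏ j, condDensity P r πpr s.1 (s.2 j))
        ∂(pmMeasure P r N)
      = (N * ∫⁻ u in Set.range P.mulVec, ∫⁻ v in {z | P *ᵥ z = 0},
          ENNReal.ofReal (f (u + v) * πpr (u + v))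
            ∂μH[((d - r : ℕ) : ℝ)] ∂μH[((r : ℕ) : ℝ)]).toReal := by
  have hπ := hπpr.1
  have hπ0 := hπpr.2.1
  have := hP.sigmaFinite_restrict_ker
  have := hP.sigmaFinite_restrict_range
  have hm : Measurable fun s : (Fin d → ℝ) × (Fin N → Fin d → ℝ) ↦ margDensity P r πpr s.1 :=
    (hP.measurable_margDensity hπ).comp measurable_fst
  have hm0 : ∀ u, 0 ≤ margDensity P r πpr u := fun u ↦ integral_nonneg fun _ ↦ hπ0 _
  have hcond0 : ∀ u v, 0 ≤ condDensity P r πpr u v := fun u v ↦ div_nonneg (hπ0 _) (hm0 u)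
  have hfin : ∀ᵐ u ∂(μH[((r : ℕ) : ℝ)]).restrict (Set.range P.mulVec),
      ∫⁻ v in {z | P *ᵥ z = 0}, ENNReal.ofReal (πpr (u + v)) ∂μH[((d - r : ℕ) : ℝ)] ≠ ∞ := by
    obtain ⟨c, -, hc, hlin⟩ := hP.exists_lintegral_range_ker
    refine (ae_lt_top' (by fun_prop) ?_).mono fun u hu ↦ hu.ne
    rw [hlin (fun x ↦ ENNReal.ofReal (πpr x)) (by fun_prop)]
    exact ENNReal.mul_ne_top hc hπpr.lintegral_ofReal_ne_top
  have hint0 : ∀ s : (Fin d → ℝ) × (Fin N → Fin d → ℝ), ∀ k,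
      0 ≤ f (s.1 + s.2 k) * (margDensity P r πpr s.1 * ∏ j, condDensity P r πpr s.1 (s.2 j)) :=
    fun s k ↦ mul_nonneg (hf0 _) (mul_nonneg (hm0 _) (Finset.prod_nonneg fun j _ ↦ hcond0 _ _))
  rw [integral_eq_lintegral_of_nonneg_ae
    (ae_of_all _ fun s ↦ Finset.sum_nonneg fun k _ ↦ hint0 s k) (by unfold condDensity; fun_prop)]
  congr 1
  calc
    _ = ∫⁻ s, ∑ k, ENNReal.ofReal (f (s.1 + s.2 k)) *
          ENNReal.ofReal (margDensity P r πpr s.1 * ∏ j, condDensity P r πpr s.1 (s.2 j))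
          ∂(pmMeasure P r N) :=
      lintegral_congr fun s ↦ by
        rw [ENNReal.ofReal_sum_of_nonneg fun k _ ↦ hint0 s k]
        exact Finset.sum_congr rfl fun k _ ↦ ENNReal.ofReal_mul (hf0 _)
    _ = N * ∫⁻ u in Set.range P.mulVec, ∫⁻ v in {z | P *ᵥ z = 0},
          ENNReal.ofReal (f (u + v)) * ENNReal.ofReal (πpr (u + v))
            ∂μH[((d - r : ℕ) : ℝ)] ∂μH[((r : ℕ) : ℝ)] :=
      lintegral_prod_pi_sum_mul_marginal_mul_prod_cond _ _ N hπ hπ0 hfin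
        (F := fun x ↦ ENNReal.ofReal (f x)) (by fun_prop)
    _ = _ := by
      congr 1
      exact lintegral_congr fun u ↦ lintegral_congr fun v ↦ (ENNReal.ofReal_mul (hf0 _)).symm

end IsProjector

theorem integral_mul_posteriorDensity {n : ℕ} {πpr L φ : (Fin n → ℝ) → ℝ} (hπ : Measurable πpr)
    (hπ0 : ∀ x, 0 ≤ πpr x) (hL : Measurable L) (hL0 : ∀ x, 0 ≤ L x) (hφ : Measurable φ)
    (hφ0 : ∀ x, 0 ≤ φ x) :
    ∫ x, φ x * posteriorDensity πpr L x
      = (∫⁻ x, ENNReal.ofReal (L x * φ x * πpr x)).toReal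
        / (∫⁻ x, ENNReal.ofReal (L x * πpr x)).toReal := by
  simp_rw [posteriorDensity, evidence, mul_div_assoc', integral_div]
  rw [integral_eq_lintegral_of_nonneg_ae (ae_of_all _ fun x ↦ mul_nonneg (hL0 x) (hπ0 x))
      (by fun_prop),
    integral_eq_lintegral_of_nonneg_ae
      (ae_of_all _ fun x ↦ mul_nonneg (hφ0 x) (mul_nonneg (hL0 x) (hπ0 x))) (by fun_prop)]
  simp_rw [mul_left_comm (φ _), mul_assoc]

theorem pmTarget_eq_sum_mul {d N r : ℕ} (P : Matrix (Fin d) (Fin d) ℝ) (πpr L : (Fin d → ℝ) → ℝ)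
    (s : (Fin d → ℝ) × (Fin N → Fin d → ℝ)) :
    pmTarget P r πpr L s
      = (∑ i, L (s.1 + s.2 i)) *
          (margDensity P r πpr s.1 * ∏ j, condDensity P r πpr s.1 (s.2 j)) := by
  unfold pmTarget; ring

theorem statement15_general {d : ℕ} (N : ℕ) (hN : 1 ≤ N)
    (πpr : (Fin d → ℝ) → ℝ) (hπpr : IsDensity πpr)
    (L : (Fin d → ℝ) → ℝ) (hL_meas : Measurable L) (hL_nonneg : ∀ x, 0 ≤ L x)
    (r : ℕ) (P : Matrix (Fin d) (Fin d) ℝ) (hP : IsProjector P r) :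
    ∀ φ : (Fin d → ℝ) → ℝ, Measurable φ → (∀ x, 0 ≤ φ x) →
      (∫ s, (∑ k, L (s.1 + s.2 k) / (∑ i, L (s.1 + s.2 i)) * φ (s.1 + s.2 k)) *
          (pmTarget P r πpr L s / ∫ s', pmTarget P r πpr L s' ∂(pmMeasure P r N))
        ∂(pmMeasure P r N))
        = ∫ x, φ x * posteriorDensity πpr L x := by
  intro φ hφ hφ0
  obtain ⟨c, hc0, hc, hlin⟩ := hP.exists_lintegral_range_ker
  have key : ∀ f : (Fin d → ℝ) → ℝ, Measurable f → (∀ x, 0 ≤ f x) →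
      ∫ s, ∑ k, f (s.1 + s.2 k) * (margDensity P r πpr s.1 * ∏ j, condDensity P r πpr s.1 (s.2 j))
          ∂(pmMeasure P r N)
        = (N * c * ∫⁻ x, ENNReal.ofReal (f x * πpr x)).toReal := fun f hf hf0 ↦ by
    rw [hP.integral_sum_mul_margDensity_mul_prod_condDensity N hπpr hf hf0,
      hlin (fun x ↦ ENNReal.ofReal (f x * πpr x)) (ENNReal.measurable_ofReal.comp (hf.mul hπpr.1)), mul_assoc]
  have hZ : ∫ s, pmTarget P r πpr L s ∂(pmMeasure P r N)
      = (N * c * ∫⁻ x, ENNReal.ofReal (L x * πpr x)).toReal := by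
    simp_rw [pmTarget_eq_sum_mul, Finset.sum_mul]
    exact key L hL_meas hL_nonneg
  calc
    _ = ∫ s, (∑ k, L (s.1 + s.2 k) * φ (s.1 + s.2 k) *
            (margDensity P r πpr s.1 * ∏ j, condDensity P r πpr s.1 (s.2 j)))
          / ∫ s', pmTarget P r πpr L s' ∂(pmMeasure P r N) ∂(pmMeasure P r N) := by
      refine integral_congr_ae (ae_of_all _ fun s ↦ ?_)
      dsimp only
      rw [pmTarget_eq_sum_mul, mul_div_assoc',
        Finset.sum_div_sum_mul_mul_sum_mul _ fun i _ ↦ hL_nonneg _]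
    _ = (N * c * ∫⁻ x, ENNReal.ofReal (L x * φ x * πpr x)).toReal
          / (N * c * ∫⁻ x, ENNReal.ofReal (L x * πpr x)).toReal := by
      rw [integral_div, hZ, key (fun x ↦ L x * φ x) (hL_meas.mul hφ)
        fun x ↦ mul_nonneg (hL_nonneg x) (hφ0 x)]
    _ = _ := by
      rw [ENNReal.toReal_mul_div_toReal_mul_left (by simp [hc0]; omega)
        (ENNReal.mul_ne_top (ENNReal.natCast_ne_top N) hc),
        integral_mul_posteriorDensity hπpr.1 hπpr.2.1 hL_meas hL_nonneg hφ hφ0]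

/-- Proposition 4. If `(X_r, {X⊥⁽ⁱ⁾})` is distributed according to the
pseudo-marginal target `π_tar^{y,N}` and `X⊥` is selected among `{X⊥⁽ⁱ⁾}` with
probabilities proportional to `L^y(X_r + X⊥⁽ᵏ⁾)`, then `X = X_r + X⊥` is distributed
according to the exact posterior `π_pos^y`; equivalently, for every nonnegative
measurable test function `φ`, the expectations agree. -/
theorem statement15 {d : ℕ} (N : ℕ) (hN : 1 ≤ N)
    (πpr : (Fin d → ℝ) → ℝ) (hπpr : IsDensity πpr)
    (L : (Fin d → ℝ) → ℝ) (hL_meas : Measurable L) (hL_nonneg : ∀ x, 0 ≤ L x)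
    (hpos : 0 < evidence πpr L)
    (r : ℕ) (P : Matrix (Fin d) (Fin d) ℝ) (hP : IsProjector P r) :
    ∀ φ : (Fin d → ℝ) → ℝ, Measurable φ → (∀ x, 0 ≤ φ x) →
      (∫ s, (∑ k, L (s.1 + s.2 k) / (∑ i, L (s.1 + s.2 i)) * φ (s.1 + s.2 k)) *
          (pmTarget P r πpr L s / ∫ s', pmTarget P r πpr L s' ∂(pmMeasure P r N))
        ∂(pmMeasure P r N))
        = ∫ x, φ x * posteriorDensity πpr L x :=
  statement15_general N hN πpr hπpr L hL_meas hL_nonneg r P hP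
end
end

section
/- Fix a rank-r projector P_r, data y, a proposal density q(·|x_r) on Im(P_r), and a fixed approximate reduced likelihood L̃_N^y: Im(P_r) → ℝ_{>0}. Consider the two-stage Metropolis–Hastings method: from state (x_r, x_⊥), propose x_r† ∼ q(·|x_r); with first-stage probability α(x_r†|x_r) = min{1, [L̃_N^y(x_r†) π_pr(x_r†) q(x_r|x_r†)] / [L̃_N^y(x_r) π_pr(x_r) q(x_r†|x_r)]} proceed to the second stage, where x_⊥† ∼ π_pr(·|x_r†) is drawn and the pair (x_r†, x_⊥†) is accepted with probability β(x_r†, x_⊥† | x_r, x_⊥) = min{1, [L^y(x_r† + x_⊥†) L̃_N^y(x_r)] / [L^y(x_r + x_⊥) L̃_N^y(x_r†)]}; otherwise the chain stays at (x_r, x_⊥). Then this procedure constructs a Markov chain on ℝ^d with the full posterior π_pos^y(x) ∝ L^y(x)π_pr(x) as its invariant density. -/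
/-! The two-stage chain is a Metropolis–Hastings chain on `Im P × Ker P` whose accepted moves
`s ↦ t` have density `K t s = q(t_r | s_r) α π_pr(t_⊥ | t_r) β`. Writing `a, b` for the
first-stage weights `L̃(s_r) π_pr(s_r) q(t_r | s_r)` and `L̃(t_r) π_pr(t_r) q(s_r | t_r)`, and
`c, e` for the second-stage weights `L(s) L̃(t_r)` and `L(t) L̃(s_r)`, the `L̃` factors cancel:
`π_pos(s) K t s = min a b · min c e · π_pr(s) π_pr(t) / (Z L̃(s_r) L̃(t_r) π_pr(s_r) π_pr(t_r))`,
which is symmetric in `s` and `t` (detailed balance). Because `α, β ≤ 1` and `q` and the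
conditional prior are probability densities, `K · s` has mass at most one, so the rejection
probability is nonnegative, and Tonelli's theorem turns detailed balance into invariance.
The computation is carried out in `ℝ≥0∞`, so no integrability of the posterior with respect
to the Hausdorff reference measure is needed. -/

open MeasureTheory Matrix

noncomputable section

/-- Reference (product) measure on `Im(P) × Ker(P)`. -/
def daMeasure {d : ℕ} (P : Matrix (Fin d) (Fin d) ℝ) (r : ℕ) :
    Measure ((Fin d → ℝ) × (Fin d → ℝ)) :=
  ((μH[((r : ℝ))]).restrict (Set.range P.mulVec)).prod
    ((μH[((d - r : ℕ) : ℝ)]).restrict {z : Fin d → ℝ | P.mulVec z = 0})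

/-- Density (w.r.t. `daMeasure`) of an accepted two-stage (delayed-acceptance) move from
`s = (x_r, x⊥)` to `t = (x_r†, x⊥†)`: first-stage proposal `q` with acceptance
probability `α`, second-stage proposal `π_pr(x⊥†|x_r†)` with acceptance probability
`β`. -/
def daMoveDensity {d : ℕ} (P : Matrix (Fin d) (Fin d) ℝ) (r : ℕ)
    (πpr L Lt : (Fin d → ℝ) → ℝ) (q : (Fin d → ℝ) → (Fin d → ℝ) → ℝ)
    (t s : (Fin d → ℝ) × (Fin d → ℝ)) : ℝ :=
  q t.1 s.1 *
    min 1 ((Lt t.1 * margDensity P r πpr t.1 * q s.1 t.1) /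
      (Lt s.1 * margDensity P r πpr s.1 * q t.1 s.1)) *
    condDensity P r πpr t.1 t.2 *
    min 1 ((L (t.1 + t.2) * Lt s.1) / (L (s.1 + s.2) * Lt t.1))

open scoped ENNReal

theorem Submodule.isFiniteMeasureOnCompacts_hausdorffMeasure_restrict {E : Type*}
    [NormedAddCommGroup E] [NormedSpace ℝ E] [MeasurableSpace E] [BorelSpace E]
    (V : Submodule ℝ E) [FiniteDimensional ℝ V] :
    IsFiniteMeasureOnCompacts ((μH[(Module.finrank ℝ V : ℝ)]).restrict (V : Set E)) := by
  set k := Module.finrank ℝ V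
  refine ⟨fun K hK => ?_⟩
  let e : (Fin k → ℝ) ≃L[ℝ] V :=
    (LinearEquiv.ofFinrankEq _ _ (by simp [k])).toContinuousLinearEquiv
  let φ : (Fin k → ℝ) →L[ℝ] E := V.subtypeL.comp e.toContinuousLinearMap
  have hrange : Set.range φ = V := by
    change Set.range (((↑) : V → E) ∘ e) = V
    rw [Set.range_comp, e.surjective.range_eq, Set.image_univ, Subtype.range_coe]
  have hcompact : IsCompact (φ ⁻¹' K) := by
    have : IsCompact (((↑) : V → E) ⁻¹' K) := by
      rw [Subtype.isCompact_iff, Set.image_preimage_eq_inter_range, Subtype.range_coe]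
      exact hK.inter_right (Submodule.closed_of_finiteDimensional V)
    exact e.toHomeomorph.isCompact_preimage.mpr this
  have hvolume : (μH[(k : ℝ)] : Measure (Fin k → ℝ)) = volume := by
    simpa using hausdorffMeasure_pi_real (ι := Fin k)
  rw [Measure.restrict_apply' (Submodule.closed_of_finiteDimensional V).measurableSet,
    ← hrange, ← Set.image_preimage_eq_inter_range]
  calc μH[(k : ℝ)] (φ '' (φ ⁻¹' K))
      ≤ (‖φ‖₊ : ℝ≥0∞) ^ (k : ℝ) * μH[(k : ℝ)] (φ ⁻¹' K) :=
        φ.lipschitz.hausdorffMeasure_image_le (by positivity) _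
    _ < ⊤ := by
      rw [hvolume]
      exact ENNReal.mul_lt_top (by simp) hcompact.measure_lt_top

theorem Submodule.sigmaFinite_hausdorffMeasure_restrict {E : Type*}
    [NormedAddCommGroup E] [NormedSpace ℝ E] [MeasurableSpace E] [BorelSpace E]
    [FiniteDimensional ℝ E] (V : Submodule ℝ E) {k : ℕ} (hk : Module.finrank ℝ V = k) :
    SigmaFinite ((μH[(k : ℝ)]).restrict (V : Set E)) := by
  have := V.isFiniteMeasureOnCompacts_hausdorffMeasure_restrict
  rw [hk] at this
  infer_instance

theorem lintegral_ofReal_div_integral_le_one {α : Type*} [MeasurableSpace α] {μ : Measure α}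
    {f : α → ℝ} (hf : ∀ x, 0 ≤ f x) :
    ∫⁻ x, ENNReal.ofReal (f x / ∫ y, f y ∂μ) ∂μ ≤ 1 := by
  by_cases hzero : ∫ y, f y ∂μ = 0
  · simp [hzero]
  have hint : Integrable f μ := .of_integral_ne_zero hzero
  have hpos : 0 < ∫ y, f y ∂μ := (integral_nonneg hf).lt_of_ne' hzero
  refine le_of_eq ?_
  calc ∫⁻ x, ENNReal.ofReal (f x / ∫ y, f y ∂μ) ∂μ
      = (∫⁻ x, ENNReal.ofReal (f x) ∂μ) * ENNReal.ofReal (∫ y, f y ∂μ)⁻¹ := by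
        simp_rw [div_eq_mul_inv, ENNReal.ofReal_mul (hf _)]
        exact lintegral_mul_const' _ _ ENNReal.ofReal_ne_top
    _ = 1 := by
        rw [← ofReal_integral_eq_lintegral_ofReal hint (ae_of_all _ hf),
          ← ENNReal.ofReal_mul hpos.le, mul_inv_cancel₀ hzero, ENNReal.ofReal_one]

theorem lintegral_ofReal_eq_one_of_integral_eq_one {α : Type*} [MeasurableSpace α]
    {μ : Measure α} {f : α → ℝ} (hf : ∀ x, 0 ≤ f x) (h : ∫ x, f x ∂μ = 1) :
    ∫⁻ x, ENNReal.ofReal (f x) ∂μ = 1 := by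
  have hint : Integrable f μ := .of_integral_ne_zero (by simp [h])
  rw [← ofReal_integral_eq_lintegral_ofReal hint (ae_of_all _ hf), h, ENNReal.ofReal_one]

section DetailedBalance

variable {α : Type*} [MeasurableSpace α] {ν : Measure α} [SFinite ν]

theorem lintegral_mul_setLIntegral_eq_of_detailedBalance {p : α → ℝ≥0∞} {k : α → α → ℝ≥0∞}
    (hp : Measurable p) (hk : Measurable (Function.uncurry k))
    (hdb : ∀ s t, p s * k t s = p t * k s t) (A : Set α) :
    ∫⁻ s, p s * ∫⁻ t in A, k t s ∂ν ∂ν = ∫⁻ t in A, p t * ∫⁻ s, k s t ∂ν ∂ν := by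
  have hk' (s : α) : Measurable (k · s) := hk.comp (measurable_id.prodMk measurable_const)
  calc ∫⁻ s, p s * ∫⁻ t in A, k t s ∂ν ∂ν
      = ∫⁻ s, ∫⁻ t in A, p s * k t s ∂ν ∂ν := by
        simp_rw [lintegral_const_mul _ (hk' _)]
    _ = ∫⁻ t in A, ∫⁻ s, p s * k t s ∂ν ∂ν :=
        lintegral_lintegral_swap
          ((hp.comp measurable_fst).mul (hk.comp measurable_swap)).aemeasurable
    _ = ∫⁻ t in A, ∫⁻ s, p t * k s t ∂ν ∂ν :=
        lintegral_congr fun t => lintegral_congr fun s => hdb s t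
    _ = ∫⁻ t in A, p t * ∫⁻ s, k s t ∂ν ∂ν := by
        simp_rw [lintegral_const_mul _ (hk' _)]

theorem lintegral_acceptReject_eq_of_detailedBalance {p : α → ℝ≥0∞} {k : α → α → ℝ≥0∞}
    (hp : Measurable p) (hk : Measurable (Function.uncurry k))
    (hdb : ∀ s t, p s * k t s = p t * k s t) (hk₁ : ∀ᵐ s ∂ν, ∫⁻ t, k t s ∂ν ≤ 1)
    {A : Set α} (hA : MeasurableSet A) :
    ∫⁻ s, p s * (∫⁻ t in A, k t s ∂ν) + A.indicator (fun s => p s * (1 - ∫⁻ t, k t s ∂ν)) s ∂ν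
      = ∫⁻ s in A, p s ∂ν := by
  have hflowA : Measurable fun s => p s * ∫⁻ t in A, k t s ∂ν :=
    hp.mul (hk.comp measurable_swap).lintegral_prod_right'
  have hflow : Measurable fun s => p s * ∫⁻ t, k t s ∂ν :=
    hp.mul (hk.comp measurable_swap).lintegral_prod_right'
  rw [lintegral_add_left hflowA, lintegral_indicator hA,
    lintegral_mul_setLIntegral_eq_of_detailedBalance hp hk hdb A, ← lintegral_add_left hflow]
  refine setLIntegral_congr_fun_ae hA ?_
  filter_upwards [hk₁] with s hs _
  rw [← mul_add, add_tsub_cancel_of_le hs, mul_one]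

theorem integral_acceptReject_eq_of_detailedBalance {π : α → ℝ} {K : α → α → ℝ}
    (hπ : Measurable π) (hπ₀ : ∀ s, 0 ≤ π s) (hK : Measurable (Function.uncurry K))
    (hK₀ : ∀ t s, 0 ≤ K t s) (hdb : ∀ s t, π s * K t s = π t * K s t)
    (hK₁ : ∀ᵐ s ∂ν, ∫⁻ t, ENNReal.ofReal (K t s) ∂ν ≤ 1) {A : Set α} (hA : MeasurableSet A) :
    ∫ s, π s * ((∫ t in A, K t s ∂ν) + (1 - ∫ t, K t s ∂ν) * A.indicator (fun _ => (1 : ℝ)) s) ∂ν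
      = ∫ s in A, π s ∂ν := by
  set p : α → ℝ≥0∞ := fun s => ENNReal.ofReal (π s)
  set k : α → α → ℝ≥0∞ := fun t s => ENNReal.ofReal (K t s)
  have hk : Measurable (Function.uncurry k) := hK.ennreal_ofReal
  replace hK₁ : ∀ᵐ s ∂ν, ∫⁻ t, k t s ∂ν ≤ 1 := hK₁
  have hdb' (s t : α) : p s * k t s = p t * k s t := by
    simp only [p, k, ← ENNReal.ofReal_mul (hπ₀ _), hdb]
  set F : α → ℝ≥0∞ := fun s =>
    p s * (∫⁻ t in A, k t s ∂ν) + A.indicator (fun s => p s * (1 - ∫⁻ t, k t s ∂ν)) s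
  have hF : Measurable F :=
    (hπ.ennreal_ofReal.mul (hk.comp measurable_swap).lintegral_prod_right').add
      ((hπ.ennreal_ofReal.mul
        (measurable_const.sub (hk.comp measurable_swap).lintegral_prod_right')).indicator hA)
  have hK_toReal (μ : Measure α) (s : α) : ∫ t, K t s ∂μ = (∫⁻ t, k t s ∂μ).toReal :=
    integral_eq_lintegral_of_nonneg_ae (ae_of_all _ (hK₀ · s))
      (hK.comp (measurable_id.prodMk measurable_const)).aestronglyMeasurable
  have hF_toReal : ∀ᵐ s ∂ν, F s ≠ ⊤ ∧
      π s * ((∫ t in A, K t s ∂ν) + (1 - ∫ t, K t s ∂ν) * A.indicator (fun _ => (1 : ℝ)) s)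
        = (F s).toReal := by
    filter_upwards [hK₁] with s hs
    have hA_ne_top : ∫⁻ t in A, k t s ∂ν ≠ ⊤ :=
      ((setLIntegral_le_lintegral A _).trans hs |>.trans_lt ENNReal.one_lt_top).ne
    rw [hK_toReal, hK_toReal]
    by_cases hsA : s ∈ A
    · simp only [F, Set.indicator_of_mem hsA, ← mul_add]
      refine ⟨ENNReal.mul_ne_top ENNReal.ofReal_ne_top (ENNReal.add_ne_top.2 ⟨hA_ne_top,
        (tsub_le_self.trans_lt ENNReal.one_lt_top).ne⟩), ?_⟩
      rw [ENNReal.toReal_mul, ENNReal.toReal_add hA_ne_top (by simp),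
        ENNReal.toReal_sub_of_le hs ENNReal.one_ne_top, ENNReal.toReal_ofReal (hπ₀ s)]
      simp
    · simp [F, hsA, p, ENNReal.toReal_ofReal (hπ₀ s), ENNReal.mul_ne_top, hA_ne_top]
  rw [integral_congr_ae (hF_toReal.mono fun _ h => h.2),
    integral_toReal hF.aemeasurable (hF_toReal.mono fun _ h => h.1.lt_top),
    lintegral_acceptReject_eq_of_detailedBalance hπ.ennreal_ofReal hk hdb' hK₁ hA,
    integral_eq_lintegral_of_nonneg_ae (ae_of_all _ hπ₀) hπ.aestronglyMeasurable]

end DetailedBalance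

/-- Also at `a = 0`, where both sides vanish because `x / 0 = 0`. -/
theorem min_one_div_eq_min_div {a : ℝ} (ha : 0 ≤ a) (b : ℝ) : min 1 (b / a) = min a b / a := by
  rcases ha.eq_or_lt with rfl | ha
  · simp
  · rw [← div_self ha.ne', min_div_div_right ha.le]

theorem posteriorDensity_nonneg {n : ℕ} {πpr L : (Fin n → ℝ) → ℝ} (hπpr : ∀ x, 0 ≤ πpr x)
    (hL : ∀ x, 0 ≤ L x) (x : Fin n → ℝ) : 0 ≤ posteriorDensity πpr L x :=
  div_nonneg (mul_nonneg (hL x) (hπpr x)) (integral_nonneg fun y => mul_nonneg (hL y) (hπpr y))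

section DelayedAcceptance

variable {d r : ℕ} {P : Matrix (Fin d) (Fin d) ℝ} {πpr L Lt : (Fin d → ℝ) → ℝ}
  {q : (Fin d → ℝ) → (Fin d → ℝ) → ℝ}

theorem sigmaFinite_hausdorffMeasure_restrict_range_mulVec (hr : P.rank = r) :
    SigmaFinite ((μH[(r : ℝ)]).restrict (Set.range P.mulVec)) :=
  (LinearMap.range P.mulVecLin).sigmaFinite_hausdorffMeasure_restrict hr

theorem sigmaFinite_hausdorffMeasure_restrict_ker_mulVec (hr : P.rank = r) :
    SigmaFinite ((μH[((d - r : ℕ) : ℝ)]).restrict {z : Fin d → ℝ | P.mulVec z = 0}) := by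
  refine (LinearMap.ker P.mulVecLin).sigmaFinite_hausdorffMeasure_restrict ?_
  have := LinearMap.finrank_range_add_finrank_ker P.mulVecLin
  rw [Module.finrank_fin_fun] at this
  change P.rank + _ = d at this
  omega

theorem measurable_margDensity
    [SFinite ((μH[((d - r : ℕ) : ℝ)]).restrict {z : Fin d → ℝ | P.mulVec z = 0})]
    {ρ : (Fin d → ℝ) → ℝ} (hρ : Measurable ρ) : Measurable (margDensity P r ρ) :=
  (hρ.comp measurable_add).stronglyMeasurable.integral_prod_right'.measurable

theorem measurable_condDensity
    [SFinite ((μH[((d - r : ℕ) : ℝ)]).restrict {z : Fin d → ℝ | P.mulVec z = 0})]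
    {ρ : (Fin d → ℝ) → ℝ} (hρ : Measurable ρ) :
    Measurable (Function.uncurry (condDensity P r ρ)) :=
  (hρ.comp measurable_add).div ((measurable_margDensity hρ).comp measurable_fst)

theorem measurable_daMoveDensity
    [SFinite ((μH[((d - r : ℕ) : ℝ)]).restrict {z : Fin d → ℝ | P.mulVec z = 0})]
    (hπpr : Measurable πpr) (hL : Measurable L) (hLt : Measurable Lt)
    (hq : Measurable fun p : (Fin d → ℝ) × (Fin d → ℝ) => q p.1 p.2) :
    Measurable (Function.uncurry (daMoveDensity P r πpr L Lt q)) := by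
  have hm := measurable_margDensity (P := P) (r := r) hπpr
  unfold daMoveDensity condDensity
  fun_prop

theorem margDensity_nonneg {ρ : (Fin d → ℝ) → ℝ} (hρ : ∀ x, 0 ≤ ρ x) (x : Fin d → ℝ) :
    0 ≤ margDensity P r ρ x :=
  integral_nonneg fun _ => hρ _

theorem condDensity_nonneg {ρ : (Fin d → ℝ) → ℝ} (hρ : ∀ x, 0 ≤ ρ x) (x z : Fin d → ℝ) :
    0 ≤ condDensity P r ρ x z :=
  div_nonneg (hρ _) (margDensity_nonneg hρ x)

theorem lintegral_condDensity_le_one {ρ : (Fin d → ℝ) → ℝ} (hρ : ∀ x, 0 ≤ ρ x)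
    (x : Fin d → ℝ) :
    ∫⁻ z in {z : Fin d → ℝ | P.mulVec z = 0}, ENNReal.ofReal (condDensity P r ρ x z)
      ∂(μH[((d - r : ℕ) : ℝ)]) ≤ 1 :=
  lintegral_ofReal_div_integral_le_one fun _ => hρ _

theorem daMoveDensity_mem_Icc (hπpr : ∀ x, 0 ≤ πpr x) (hL : ∀ x, 0 ≤ L x)
    (hLt : ∀ x, 0 ≤ Lt x) (hq : ∀ a b, 0 ≤ q a b) (t s : (Fin d → ℝ) × (Fin d → ℝ)) :
    daMoveDensity P r πpr L Lt q t s ∈ Set.Icc 0 (q t.1 s.1 * condDensity P r πpr t.1 t.2) := by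
  have hm := margDensity_nonneg (P := P) (r := r) hπpr
  have hα : 0 ≤ min 1 ((Lt t.1 * margDensity P r πpr t.1 * q s.1 t.1) /
      (Lt s.1 * margDensity P r πpr s.1 * q t.1 s.1)) :=
    le_min zero_le_one (div_nonneg (mul_nonneg (mul_nonneg (hLt _) (hm _)) (hq _ _))
      (mul_nonneg (mul_nonneg (hLt _) (hm _)) (hq _ _)))
  have hβ : 0 ≤ min 1 ((L (t.1 + t.2) * Lt s.1) / (L (s.1 + s.2) * Lt t.1)) :=
    le_min zero_le_one (div_nonneg (mul_nonneg (hL _) (hLt _)) (mul_nonneg (hL _) (hLt _)))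
  have hqc := mul_nonneg (hq t.1 s.1) (condDensity_nonneg (P := P) (r := r) hπpr t.1 t.2)
  unfold daMoveDensity
  rw [show ∀ a α c β : ℝ, a * α * c * β = a * c * (α * β) from fun _ _ _ _ => by ring]
  exact ⟨mul_nonneg hqc (mul_nonneg hα hβ),
    mul_le_of_le_one_right hqc (mul_le_one₀ (min_le_left _ _) hβ (min_le_left _ _))⟩

theorem posteriorDensity_mul_daMoveDensity (hπpr : ∀ x, 0 ≤ πpr x) (hL : ∀ x, 0 ≤ L x)
    (hLt : ∀ x, 0 < Lt x) (hq : ∀ a b, 0 ≤ q a b) (t s : (Fin d → ℝ) × (Fin d → ℝ)) :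
    posteriorDensity πpr L (s.1 + s.2) * daMoveDensity P r πpr L Lt q t s
      = min (Lt s.1 * margDensity P r πpr s.1 * q t.1 s.1)
            (Lt t.1 * margDensity P r πpr t.1 * q s.1 t.1)
          * min (L (s.1 + s.2) * Lt t.1) (L (t.1 + t.2) * Lt s.1)
          * (πpr (s.1 + s.2) * πpr (t.1 + t.2))
          / (evidence πpr L * (Lt s.1 * Lt t.1)
            * (margDensity P r πpr s.1 * margDensity P r πpr t.1)) := by
  have hm := margDensity_nonneg (P := P) (r := r) hπpr
  unfold posteriorDensity daMoveDensity condDensity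
  set a := Lt s.1 * margDensity P r πpr s.1 * q t.1 s.1
  set b := Lt t.1 * margDensity P r πpr t.1 * q s.1 t.1
  set c := L (s.1 + s.2) * Lt t.1
  set e := L (t.1 + t.2) * Lt s.1
  have ha : 0 ≤ a := mul_nonneg (mul_nonneg (hLt _).le (hm _)) (hq _ _)
  have hb : 0 ≤ b := mul_nonneg (mul_nonneg (hLt _).le (hm _)) (hq _ _)
  have hc : 0 ≤ c := mul_nonneg (hL _) (hLt _).le
  have he : 0 ≤ e := mul_nonneg (hL _) (hLt _).le
  rw [min_one_div_eq_min_div ha, min_one_div_eq_min_div hc]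
  rcases ha.eq_or_lt with ha_zero | ha_pos
  · simp [← ha_zero, min_eq_left hb]
  rcases hc.eq_or_lt with hc_zero | hc_pos
  · simp [← hc_zero, min_eq_left he]
  rcases eq_or_ne (evidence πpr L) 0 with hZ | hZ
  · simp [hZ]
  rcases eq_or_ne (margDensity P r πpr t.1) 0 with hmt | hmt
  · simp [hmt]
  have hms : margDensity P r πpr s.1 ≠ 0 := fun h => by simp [a, h] at ha_pos
  have hqts : q t.1 s.1 ≠ 0 := fun h => by simp [a, h] at ha_pos
  have hLs : L (s.1 + s.2) ≠ 0 := fun h => by simp [c, h] at hc_pos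
  have hLts := (hLt s.1).ne'
  have hLtt := (hLt t.1).ne'
  simp only [a, c]
  field_simp

theorem posteriorDensity_mul_daMoveDensity_comm (hπpr : ∀ x, 0 ≤ πpr x) (hL : ∀ x, 0 ≤ L x)
    (hLt : ∀ x, 0 < Lt x) (hq : ∀ a b, 0 ≤ q a b) (s t : (Fin d → ℝ) × (Fin d → ℝ)) :
    posteriorDensity πpr L (s.1 + s.2) * daMoveDensity P r πpr L Lt q t s
      = posteriorDensity πpr L (t.1 + t.2) * daMoveDensity P r πpr L Lt q s t := by
  rw [posteriorDensity_mul_daMoveDensity hπpr hL hLt hq,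
    posteriorDensity_mul_daMoveDensity hπpr hL hLt hq, min_comm (Lt s.1 * _ * _),
    min_comm (L (s.1 + s.2) * _)]
  ring

theorem lintegral_daMoveDensity_le_one
    [SFinite ((μH[(r : ℝ)]).restrict (Set.range P.mulVec))]
    [SFinite ((μH[((d - r : ℕ) : ℝ)]).restrict {z : Fin d → ℝ | P.mulVec z = 0})]
    (hπpr : Measurable πpr) (hπpr₀ : ∀ x, 0 ≤ πpr x) (hL : ∀ x, 0 ≤ L x)
    (hLt : ∀ x, 0 ≤ Lt x) (hq : Measurable fun p : (Fin d → ℝ) × (Fin d → ℝ) => q p.1 p.2)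
    (hq₀ : ∀ a b, 0 ≤ q a b) {s : (Fin d → ℝ) × (Fin d → ℝ)}
    (hs : ∫⁻ t in Set.range P.mulVec, ENNReal.ofReal (q t s.1) ∂(μH[(r : ℝ)]) = 1) :
    ∫⁻ t, ENNReal.ofReal (daMoveDensity P r πpr L Lt q t s) ∂(daMeasure P r) ≤ 1 :=
  calc ∫⁻ t, ENNReal.ofReal (daMoveDensity P r πpr L Lt q t s) ∂(daMeasure P r)
      ≤ ∫⁻ t, ENNReal.ofReal (q t.1 s.1) * ENNReal.ofReal (condDensity P r πpr t.1 t.2)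
          ∂(daMeasure P r) := by
        refine lintegral_mono fun t => ?_
        rw [← ENNReal.ofReal_mul (hq₀ _ _)]
        exact ENNReal.ofReal_le_ofReal (daMoveDensity_mem_Icc hπpr₀ hL hLt hq₀ t s).2
    _ = ∫⁻ t₁ in Set.range P.mulVec, ENNReal.ofReal (q t₁ s.1) *
          ∫⁻ t₂ in {z : Fin d → ℝ | P.mulVec z = 0},
            ENNReal.ofReal (condDensity P r πpr t₁ t₂) ∂(μH[((d - r : ℕ) : ℝ)])
          ∂(μH[(r : ℝ)]) := by
        have hmeas : Measurable fun t : (Fin d → ℝ) × (Fin d → ℝ) =>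
            ENNReal.ofReal (q t.1 s.1) * ENNReal.ofReal (condDensity P r πpr t.1 t.2) :=
          (hq.comp (measurable_fst.prodMk measurable_const)).ennreal_ofReal.mul
            (measurable_condDensity hπpr).ennreal_ofReal
        rw [daMeasure, lintegral_prod _ hmeas.aemeasurable]
        dsimp only
        exact lintegral_congr fun t₁ => lintegral_const_mul' _ _ ENNReal.ofReal_ne_top
    _ ≤ ∫⁻ t₁ in Set.range P.mulVec, ENNReal.ofReal (q t₁ s.1) ∂(μH[(r : ℝ)]) :=
        lintegral_mono fun t₁ =>
          mul_le_of_le_one_right' (lintegral_condDensity_le_one hπpr₀ t₁)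
    _ = 1 := hs

theorem ae_daMeasure_fst_mem_range :
    ∀ᵐ s ∂(daMeasure P r), s.1 ∈ Set.range P.mulVec :=
  Measure.quasiMeasurePreserving_fst.ae
    (ae_restrict_mem (LinearMap.range P.mulVecLin).closed_of_finiteDimensional.measurableSet)

end DelayedAcceptance

theorem statement17_general {d : ℕ}
    (πpr : (Fin d → ℝ) → ℝ) (hπpr : IsDensity πpr)
    (L : (Fin d → ℝ) → ℝ) (hL_meas : Measurable L) (hL_nonneg : ∀ x, 0 ≤ L x)
    (r : ℕ) (P : Matrix (Fin d) (Fin d) ℝ) (hP : IsProjector P r)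
    (q : (Fin d → ℝ) → (Fin d → ℝ) → ℝ)
    (hq_meas : Measurable fun p : (Fin d → ℝ) × (Fin d → ℝ) => q p.1 p.2)
    (hq_nonneg : ∀ a b, 0 ≤ q a b)
    (hq_dens : ∀ xr ∈ Set.range P.mulVec,
      (∫ t in Set.range P.mulVec, q t xr ∂(μH[((r : ℕ) : ℝ)])) = 1)
    (Lt : (Fin d → ℝ) → ℝ) (hLt_meas : Measurable Lt) (hLt_pos : ∀ xr, 0 < Lt xr) :
    ∀ A : Set ((Fin d → ℝ) × (Fin d → ℝ)), MeasurableSet A →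
      (∫ s, posteriorDensity πpr L (s.1 + s.2) *
          ((∫ t in A, daMoveDensity P r πpr L Lt q t s ∂(daMeasure P r)) +
            (1 - ∫ t, daMoveDensity P r πpr L Lt q t s ∂(daMeasure P r)) *
              Set.indicator A (fun _ => (1 : ℝ)) s)
        ∂(daMeasure P r))
        = ∫ s in A, posteriorDensity πpr L (s.1 + s.2) ∂(daMeasure P r) := by
  intro A hA
  obtain ⟨hπpr_meas, hπpr_nonneg, -⟩ := hπpr
  have := sigmaFinite_hausdorffMeasure_restrict_range_mulVec hP.2
  have := sigmaFinite_hausdorffMeasure_restrict_ker_mulVec hP.2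
  have : SFinite (daMeasure P r) := by rw [daMeasure]; infer_instance
  refine integral_acceptReject_eq_of_detailedBalance
    (((hL_meas.mul hπpr_meas).div_const _).comp measurable_add)
    (fun s => posteriorDensity_nonneg hπpr_nonneg hL_nonneg _)
    (measurable_daMoveDensity hπpr_meas hL_meas hLt_meas hq_meas)
    (fun t s => (daMoveDensity_mem_Icc hπpr_nonneg hL_nonneg (hLt_pos · |>.le) hq_nonneg t s).1)
    (posteriorDensity_mul_daMoveDensity_comm hπpr_nonneg hL_nonneg hLt_pos hq_nonneg) ?_ hA
  filter_upwards [ae_daMeasure_fst_mem_range] with s hs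
  exact lintegral_daMoveDensity_le_one hπpr_meas hπpr_nonneg hL_nonneg (hLt_pos · |>.le) hq_meas
    hq_nonneg (lintegral_ofReal_eq_one_of_integral_eq_one (hq_nonneg · s.1) (hq_dens s.1 hs))

/-- Proposition 5. The two-stage (delayed-acceptance)
Metropolis–Hastings method with first-stage acceptance probability `α` based on the
approximate reduced likelihood `L̃_N` and second-stage acceptance probability `β`
constructs a Markov chain having the full posterior `π_pos^y` as invariant density. -/
theorem statement17 {d : ℕ}
    (πpr : (Fin d → ℝ) → ℝ) (hπpr : IsDensity πpr)
    (L : (Fin d → ℝ) → ℝ) (hL_meas : Measurable L) (hL_nonneg : ∀ x, 0 ≤ L x)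
    (hpos : 0 < evidence πpr L)
    (r : ℕ) (P : Matrix (Fin d) (Fin d) ℝ) (hP : IsProjector P r)
    (q : (Fin d → ℝ) → (Fin d → ℝ) → ℝ)
    (hq_meas : Measurable fun p : (Fin d → ℝ) × (Fin d → ℝ) => q p.1 p.2)
    (hq_nonneg : ∀ a b, 0 ≤ q a b)
    (hq_dens : ∀ xr ∈ Set.range P.mulVec,
      (∫ t in Set.range P.mulVec, q t xr ∂(μH[((r : ℕ) : ℝ)])) = 1)
    (Lt : (Fin d → ℝ) → ℝ) (hLt_meas : Measurable Lt) (hLt_pos : ∀ xr, 0 < Lt xr) :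
    ∀ A : Set ((Fin d → ℝ) × (Fin d → ℝ)), MeasurableSet A →
      (∫ s, posteriorDensity πpr L (s.1 + s.2) *
          ((∫ t in A, daMoveDensity P r πpr L Lt q t s ∂(daMeasure P r)) +
            (1 - ∫ t, daMoveDensity P r πpr L Lt q t s ∂(daMeasure P r)) *
              Set.indicator A (fun _ => (1 : ℝ)) s)
        ∂(daMeasure P r))
        = ∫ s in A, posteriorDensity πpr L (s.1 + s.2) ∂(daMeasure P r) :=
  statement17_general πpr hπpr L hL_meas hL_nonneg r P hP q hq_meas hq_nonneg hq_dens Lt hLt_meas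
    hLt_pos
end
end
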